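/- Subexponential growth of λ-subharmonic functions under the heat semigroup: Let G be a locally finite weighted graph, f ≥ 0 a function with Δf ≤ λf pointwise for some λ > 0. Then P_t f ≤ e^{λt} f for all t ≥ 0, where P_t f := sup{P_t g : 0 ≤ g ≤ f, g bounded} is the extended minimal heat semigroup. -/

import Mathlib

/-!
Truncating `f` at a level `C ≥ 0` preserves `Δf ≤ λf` (because `λ ≥ 0`), so it suffices to
bound `P_t g` for bounded `0 ≤ g ≤ h := min f C`. On a finite set `s` the Dirichlet semigroup
`e^{tΔ_s}` is positivity preserving (`Δ_s + c` is a positive operator for `c` large), hence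
obeys a comparison principle against supersolutions. Both `e^{λt} h` and, for `s ⊆ s'`,
`e^{tΔ_{s'}} g` are supersolutions on `s`, so `e^{tΔ_s} g ≤ e^{λt} h` and `e^{tΔ_s} g`
increases with `s`. As `s` exhausts `V` these functions converge to a bounded solution of the
heat equation with initial value `g` (the equation passes to the limit in integrated form by
dominated convergence), and the minimality of `P_t g` gives `P_t g ≤ e^{λt} h ≤ e^{λt} f`.
-/

open scoped BigOperators

/-- A locally finite weighted graph. -/
structure WeightedGraph (V : Type) where
  w : V → V → ℝ
  m : V → ℝ
  symm : ∀ x y, w x y = w y x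
  loopless : ∀ x, w x x = 0
  nonneg : ∀ x y, 0 ≤ w x y
  mpos : ∀ x, 0 < m x
  locFin : ∀ x, Set.Finite {y | w x y ≠ 0}

namespace WeightedGraph

variable {V : Type} (G : WeightedGraph V)

/-- The underlying simple graph. -/
def toSimple : SimpleGraph V where
  Adj x y := x ≠ y ∧ G.w x y ≠ 0
  symm := ⟨by
    intro x y h
    exact ⟨h.1.symm, by rw [G.symm y x]; exact h.2⟩⟩
  loopless := ⟨by intro x h; exact h.1 rfl⟩

/-- The combinatorial graph distance. -/
noncomputable def dist (x y : V) : ℕ := G.toSimple.dist x y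

/-- The graph Laplacian. -/
noncomputable def lap (f : V → ℝ) (x : V) : ℝ :=
  (∑ᶠ y, G.w x y * (f y - f x)) / G.m x

/-- The weighted vertex degree. -/
noncomputable def deg (x : V) : ℝ := (∑ᶠ y, G.w x y) / G.m x

/-- `f` is `1`-Lipschitz with respect to the combinatorial distance. -/
def Lip1 (f : V → ℝ) : Prop := ∀ x y, |f x - f y| ≤ (G.dist x y : ℝ)

/-- The Ollivier curvature, via the limit-free formula
`κ(x,y) = inf {∇_{xy} Δ f : f ∈ Lip(1) ∩ C_c(V), ∇_{yx} f = 1}`. -/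
noncomputable def curv (x y : V) : ℝ :=
  sInf { c | ∃ f : V → ℝ, G.Lip1 f ∧ (Function.support f).Finite ∧
    f y - f x = (G.dist x y : ℝ) ∧ c = (G.lap f x - G.lap f y) / (G.dist x y : ℝ) }

end WeightedGraph

/-- `u` is a non-negative bounded solution of the heat equation with initial datum `f`. -/
def IsHeatSolution {V : Type} (G : WeightedGraph V) (f : V → ℝ) (u : ℝ → V → ℝ) : Prop :=
  u 0 = f ∧ (∀ t x, 0 ≤ t → 0 ≤ u t x) ∧ (∃ C, ∀ t x, 0 ≤ t → u t x ≤ C) ∧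
  ∀ x t, 0 ≤ t → HasDerivWithinAt (fun s => u s x) (G.lap (u t) x) (Set.Ici 0) t

/-- `P` is the minimal heat semigroup: for every non-negative bounded `f`, `t ↦ P t f` is the
smallest non-negative bounded solution of the heat equation with initial datum `f`; on signed
bounded functions it is given by linearity from the positive and negative parts. -/
def IsHeatSemigroup {V : Type} (G : WeightedGraph V) (P : ℝ → (V → ℝ) → V → ℝ) : Prop :=
  (∀ f : V → ℝ, (∀ x, 0 ≤ f x) → (∃ C, ∀ x, f x ≤ C) →
    IsHeatSolution G f (fun t => P t f) ∧
    ∀ u, IsHeatSolution G f u → ∀ t x, 0 ≤ t → P t f x ≤ u t x) ∧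
  (∀ f : V → ℝ, (∃ C, ∀ x, |f x| ≤ C) → ∀ t x,
    P t f x = P t (fun y => max (f y) 0) x - P t (fun y => max (-f y) 0) x)

open Set Filter Topology MeasureTheory

section PositiveExp

variable {ι : Type*} [Fintype ι] {A : (ι → ℝ) →L[ℝ] (ι → ℝ)}

theorem exp_smul_apply_nonneg (c : ℝ) (hA : ∀ v, 0 ≤ v → 0 ≤ A v + c • v) {t : ℝ} (ht : 0 ≤ t)
    {v : ι → ℝ} (hv : 0 ≤ v) : 0 ≤ NormedSpace.exp (t • A) v := by
  set B := A + c • (1 : (ι → ℝ) →L[ℝ] (ι → ℝ))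
  have hB : ∀ n (u : ι → ℝ), 0 ≤ u → 0 ≤ (B ^ n) u := by
    intro n
    induction n with
    | zero => simp
    | succ n ih => intro u hu; rw [pow_succ, mul_apply_eq_comp]; exact ih _ (hA u hu)
  have hexpB : 0 ≤ NormedSpace.exp (t • B) v := by
    refine hasSum_le (fun n => ?_) hasSum_zero
      ((NormedSpace.exp_series_hasSum_exp' (𝕂 := ℝ) (t • B)).mapL
        (ContinuousLinearMap.apply ℝ _ v))
    simp only [ContinuousLinearMap.apply_apply, smul_apply, smul_pow]
    exact smul_nonneg (by positivity) (smul_nonneg (pow_nonneg ht n) (hB n v hv))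
  have hsplit : NormedSpace.exp (t • A) = Real.exp (-(t * c)) • NormedSpace.exp (t • B) := by
    have hradius (X : (ι → ℝ) →L[ℝ] (ι → ℝ)) :
        X ∈ Metric.eball 0 (NormedSpace.expSeries ℝ ((ι → ℝ) →L[ℝ] (ι → ℝ))).radius :=
      (NormedSpace.expSeries_radius_eq_top ℝ ((ι → ℝ) →L[ℝ] (ι → ℝ))).symm ▸ edist_lt_top _ _
    have : t • A = algebraMap ℝ _ (-(t * c)) + t • B := by
      rw [Algebra.algebraMap_eq_smul_one]; simp only [B, smul_add, smul_smul]; abel_nf; simp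
    rw [this, NormedSpace.exp_add_of_commute_of_mem_ball (Algebra.commutes _ _) (hradius _)
      (hradius _), ← NormedSpace.algebraMap_exp_comm, ← Real.exp_eq_exp_ℝ]
    exact (Algebra.smul_def _ _).symm
  rw [hsplit]
  exact smul_nonneg (Real.exp_nonneg _) hexpB

theorem hasDerivAt_exp_smul_apply (A : (ι → ℝ) →L[ℝ] (ι → ℝ)) (v : ι → ℝ) (t : ℝ) :
    HasDerivAt (fun τ => NormedSpace.exp (τ • A) v) (A (NormedSpace.exp (t • A) v)) t := by
  simpa using (hasDerivAt_exp_smul_const' (𝕂 := ℝ) A t).clm_apply (hasDerivAt_const t v)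

theorem exp_smul_apply_le_of_hasDerivAt
    (hA : ∀ s : ℝ, 0 ≤ s → ∀ v, 0 ≤ v → 0 ≤ NormedSpace.exp (s • A) v)
    {w w' : ℝ → ι → ℝ} {t : ℝ} (ht : 0 ≤ t) (hw : ∀ σ ∈ Icc 0 t, HasDerivAt w (w' σ) σ)
    (hsup : ∀ σ ∈ Icc 0 t, A (w σ) ≤ w' σ) {v : ι → ℝ} (hv : v ≤ w 0) :
    NormedSpace.exp (t • A) v ≤ w t := by
  have hmono : NormedSpace.exp (t • A) v ≤ NormedSpace.exp (t • A) (w 0) := by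
    simpa using hA t ht _ (sub_nonneg.2 hv)
  set φ : ℝ → ι → ℝ := fun τ => NormedSpace.exp ((t - τ) • A) (w τ)
  have hφ : ∀ σ ∈ Icc 0 t,
      HasDerivAt φ (NormedSpace.exp ((t - σ) • A) (w' σ - A (w σ))) σ := by
    intro σ hσ
    have hE := (hasDerivAt_exp_smul_const (𝕂 := ℝ) A (t - σ)).scomp σ
      ((hasDerivAt_id σ).const_sub t)
    refine (hE.clm_apply (hw σ hσ)).congr_deriv ?_
    simp only [neg_one_smul, map_sub, neg_apply, mul_apply_eq_comp, Function.comp_apply]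
    abel
  refine hmono.trans fun i => ?_
  have hφmono : MonotoneOn (fun τ => φ τ i) (Icc 0 t) := by
    refine monotoneOn_of_hasDerivWithinAt_nonneg (convex_Icc 0 t)
      (fun σ hσ => ((hasDerivAt_pi.1 (hφ σ hσ) i).continuousAt).continuousWithinAt)
      (fun σ hσ => (hasDerivAt_pi.1 (hφ σ (interior_subset hσ)) i).hasDerivWithinAt)
      (fun σ hσ => ?_)
    have hσ' := interior_subset hσ
    exact hA _ (sub_nonneg.2 hσ'.2) _ (sub_nonneg.2 (hsup σ hσ')) i
  simpa [φ] using hφmono (left_mem_Icc.2 ht) (right_mem_Icc.2 ht) ht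

end PositiveExp

section LimitsOfSolutions

variable {ι : Type*} {l : Filter ι} {u u' : ι → ℝ → ℝ} {v v' : ℝ → ℝ} {K : ℝ}

theorem continuousOn_Ici_of_tendsto [l.NeBot]
    (hu : ∀ᶠ i in l, ∀ t, HasDerivAt (u i) (u' i t) t) (hK : ∀ i t, 0 ≤ t → |u' i t| ≤ K)
    (hv : ∀ t, 0 ≤ t → Tendsto (fun i => u i t) l (𝓝 (v t))) : ContinuousOn v (Ici 0) := by
  refine (LipschitzOnWith.of_dist_le_mul (K := K.toNNReal) fun a ha b hb => ?_).continuousOn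
  refine le_of_tendsto ((hv a ha).dist (hv b hb)) (hu.mono fun i hi => ?_)
  rw [dist_eq_norm, dist_eq_norm]
  calc ‖u i a - u i b‖ ≤ K * ‖a - b‖ :=
        Convex.norm_image_sub_le_of_norm_hasDerivWithin_le (fun σ _ => (hi σ).hasDerivWithinAt)
          (fun σ hσ => hK i σ hσ) (convex_Ici 0) hb ha
    _ ≤ K.toNNReal * ‖a - b‖ := by gcongr; exact Real.le_coe_toNNReal K

theorem integral_eq_of_tendsto [l.NeBot] [l.IsCountablyGenerated]
    (hu : ∀ᶠ i in l, ∀ t, HasDerivAt (u i) (u' i t) t) (hc : ∀ i, Continuous (u' i))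
    (hK : ∀ i t, 0 ≤ t → |u' i t| ≤ K)
    (hv : ∀ t, 0 ≤ t → Tendsto (fun i => u i t) l (𝓝 (v t)))
    (hv' : ∀ t, 0 ≤ t → Tendsto (fun i => u' i t) l (𝓝 (v' t))) {t : ℝ} (ht : 0 ≤ t) :
    v t = v 0 + ∫ σ in 0..t, v' σ := by
  have hint : Tendsto (fun i => ∫ σ in 0..t, u' i σ) l (𝓝 (∫ σ in 0..t, v' σ)) := by
    refine intervalIntegral.tendsto_integral_filter_of_dominated_convergence (fun _ => K)
      (Eventually.of_forall fun i => (hc i).aestronglyMeasurable)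
      (Eventually.of_forall fun i => ae_of_all _ fun σ hσ => hK i σ ?_)
      intervalIntegrable_const
      (ae_of_all _ fun σ hσ => hv' σ ?_)
    · rw [uIoc_of_le ht] at hσ; exact hσ.1.le
    · rw [uIoc_of_le ht] at hσ; exact hσ.1.le
  have hsub : Tendsto (fun i => ∫ σ in 0..t, u' i σ) l (𝓝 (v t - v 0)) := by
    refine ((hv t ht).sub (hv 0 le_rfl)).congr' (hu.mono fun i hi => ?_)
    exact (intervalIntegral.integral_eq_sub_of_hasDerivAt (fun σ _ => hi σ)
      ((hc i).intervalIntegrable 0 t)).symm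
  linarith [tendsto_nhds_unique hsub hint]

theorem hasDerivWithinAt_Ici_of_integral_eq (hv' : ContinuousOn v' (Ici 0))
    (hv : ∀ t, 0 ≤ t → v t = v 0 + ∫ σ in 0..t, v' σ) {t : ℝ} (ht : 0 ≤ t) :
    HasDerivWithinAt v (v' t) (Ici 0) t := by
  -- extend `v'` continuously to `(-∞, 0)` to use the two-sided fundamental theorem of calculus
  set F : ℝ → ℝ := fun σ => v' (max σ 0)
  have hF : Continuous F :=
    hv'.comp_continuous (continuous_id.max continuous_const) fun σ => le_max_right σ 0
  have hFv' : ∀ σ, 0 ≤ σ → F σ = v' σ := fun σ hσ => by simp [F, max_eq_left hσ]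
  have hprim : ∀ τ ∈ Ici (0 : ℝ), v τ = v 0 + ∫ σ in 0..τ, F σ := fun τ hτ => by
    rw [hv τ hτ]
    congr 1
    refine intervalIntegral.integral_congr fun σ hσ => (hFv' σ ?_).symm
    rw [uIcc_of_le hτ] at hσ
    exact hσ.1
  rw [← hFv' t ht]
  exact (((hF.integral_hasStrictDerivAt 0 t).hasDerivAt).const_add (v 0)).hasDerivWithinAt.congr
    hprim (hprim t ht)

end LimitsOfSolutions

theorem extend_coe_restrict_le {V : Type*} {s : Finset V} {f : V → ℝ} (hf : 0 ≤ f) :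
    Function.extend ((↑) : s → V) (s.restrict f) 0 ≤ f := by
  intro y
  by_cases hy : y ∈ s
  · exact (Subtype.val_injective.extend_apply _ _ (⟨y, hy⟩ : s)).le
  · rw [Function.extend_apply' _ _ _ fun ⟨i, hi⟩ => hy (hi ▸ i.2)]
    exact hf y

namespace WeightedGraph

variable {V : Type} (G : WeightedGraph V)

noncomputable def nbr (x : V) : Finset V := (G.locFin x).toFinset

theorem finsum_mul_eq_sum_nbr (x : V) (F : V → ℝ) :
    ∑ᶠ y, G.w x y * F y = ∑ y ∈ G.nbr x, G.w x y * F y :=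
  finsum_eq_sum_of_support_subset _ fun y hy => by simpa [nbr] using left_ne_zero_of_mul hy

theorem lap_eq_sum (f : V → ℝ) (x : V) :
    G.lap f x = (∑ y ∈ G.nbr x, G.w x y * (f y - f x)) / G.m x := by
  rw [lap, finsum_mul_eq_sum_nbr]

theorem deg_eq_sum (x : V) : G.deg x = (∑ y ∈ G.nbr x, G.w x y) / G.m x := by
  rw [deg]
  simpa using congrArg (· / G.m x) (G.finsum_mul_eq_sum_nbr x 1)

theorem deg_nonneg (x : V) : 0 ≤ G.deg x := by
  rw [deg_eq_sum]
  exact div_nonneg (Finset.sum_nonneg fun y _ => G.nonneg x y) (G.mpos x).le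

noncomputable def lapₗ : (V → ℝ) →ₗ[ℝ] (V → ℝ) where
  toFun := G.lap
  map_add' f g := funext fun x => by
    simp only [lap_eq_sum, Pi.add_apply, ← add_div, ← Finset.sum_add_distrib]
    congr 1
    exact Finset.sum_congr rfl fun y _ => by ring
  map_smul' c f := funext fun x => by
    simp only [lap_eq_sum, Pi.smul_apply, smul_eq_mul, RingHom.id_apply, Finset.mul_sum,
      mul_div_assoc']
    congr 1
    exact Finset.sum_congr rfl fun y _ => by ring

theorem lap_smul (c : ℝ) (f : V → ℝ) : G.lap (c • f) = c • G.lap f :=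
  G.lapₗ.map_smul c f

theorem lap_const (c : ℝ) : G.lap (fun _ => c) = 0 :=
  funext fun x => by simp [lap_eq_sum]

theorem continuous_lap_apply (x : V) : Continuous fun f : V → ℝ => G.lap f x := by
  simp only [lap_eq_sum]
  fun_prop

theorem lap_le_lap_of_le {f g : V → ℝ} {x : V} (hfg : ∀ y, f y ≤ g y) (hx : f x = g x) :
    G.lap f x ≤ G.lap g x := by
  simp only [lap_eq_sum, hx]
  gcongr with y
  · exact (G.mpos x).le
  · exact G.nonneg x y
  · exact hfg y

theorem lap_add_deg_mul_nonneg {f : V → ℝ} (hf : ∀ y, 0 ≤ f y) (x : V) :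
    0 ≤ G.lap f x + G.deg x * f x := by
  have : G.lap f x + G.deg x * f x = (∑ y ∈ G.nbr x, G.w x y * f y) / G.m x := by
    simp only [lap_eq_sum, deg_eq_sum, mul_sub, Finset.sum_sub_distrib, ← Finset.sum_mul]
    ring
  rw [this]
  exact div_nonneg (Finset.sum_nonneg fun y _ => mul_nonneg (G.nonneg x y) (hf y)) (G.mpos x).le

theorem abs_lap_le {f : V → ℝ} {C : ℝ} (hf0 : ∀ y, 0 ≤ f y) (hfC : ∀ y, f y ≤ C) (x : V) :
    |G.lap f x| ≤ G.deg x * C := by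
  rw [lap_eq_sum, deg_eq_sum, abs_div, abs_of_pos (G.mpos x), div_mul_eq_mul_div, Finset.sum_mul]
  refine div_le_div_of_nonneg_right ((Finset.abs_sum_le_sum_abs _ _).trans ?_) (G.mpos x).le
  refine Finset.sum_le_sum fun y _ => ?_
  rw [abs_mul, abs_of_nonneg (G.nonneg x y)]
  gcongr
  · exact G.nonneg x y
  · exact abs_sub_le_iff.2 ⟨by linarith [hfC y, hf0 x], by linarith [hfC x, hf0 y]⟩

theorem lap_min_le {f : V → ℝ} {lam C : ℝ} (hlam : 0 ≤ lam) (hC : 0 ≤ C)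
    (hf : ∀ x, G.lap f x ≤ lam * f x) (x : V) :
    G.lap (fun y => min (f y) C) x ≤ lam * min (f x) C := by
  rcases le_total (f x) C with hx | hx
  · rw [min_eq_left hx]
    exact (G.lap_le_lap_of_le (fun y => min_le_left _ _) (min_eq_left hx)).trans (hf x)
  · rw [min_eq_right hx]
    calc G.lap (fun y => min (f y) C) x ≤ G.lap (fun _ => C) x :=
          G.lap_le_lap_of_le (fun y => min_le_right _ _) (min_eq_right hx)
      _ = 0 := by rw [lap_const]; rfl
      _ ≤ lam * C := mul_nonneg hlam hC

noncomputable def dirichletLap (s : Finset V) : (s → ℝ) →L[ℝ] (s → ℝ) :=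
  LinearMap.toContinuousLinearMap <| LinearMap.funLeft ℝ ℝ ((↑) : s → V) ∘ₗ G.lapₗ ∘ₗ
    Function.ExtendByZero.linearMap ℝ ((↑) : s → V)

theorem dirichletLap_apply (s : Finset V) (v : s → ℝ) (i : s) :
    G.dirichletLap s v i = G.lap (Function.extend (↑) v 0) i :=
  rfl

-- `e^{tΔ_s} g` for the Dirichlet Laplacian `Δ_s = 1_s Δ (1_s ·)`, extended by zero off `s`.
noncomputable def dirichletHeat (s : Finset V) (g : V → ℝ) (t : ℝ) : V → ℝ :=
  Function.extend ((↑) : s → V) (NormedSpace.exp (t • G.dirichletLap s) (s.restrict g)) 0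

-- Only meaningful for `t ≥ 0` and bounded `g ≥ 0`, where it is the increasing limit along
-- finite sets `s ↑ V`; otherwise `⨆` may take its junk value.
noncomputable def dirichletHeatSup (g : V → ℝ) (t : ℝ) (x : V) : ℝ :=
  ⨆ s : Finset V, G.dirichletHeat s g t x

variable {G} {s s' : Finset V} {g : V → ℝ} {t : ℝ} {x : V}

theorem dirichletHeat_coe (i : s) :
    G.dirichletHeat s g t i = NormedSpace.exp (t • G.dirichletLap s) (s.restrict g) i :=
  Subtype.val_injective.extend_apply _ _ i

theorem dirichletHeat_of_notMem (hx : x ∉ s) : G.dirichletHeat s g t x = 0 :=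
  Function.extend_apply' _ _ _ fun ⟨i, hi⟩ => hx (hi ▸ i.2)

theorem dirichletHeat_zero (hx : x ∈ s) : G.dirichletHeat s g 0 x = g x := by
  lift x to s using hx
  simp [dirichletHeat_coe]

theorem hasDerivAt_dirichletHeat (hx : x ∈ s) :
    HasDerivAt (fun τ => G.dirichletHeat s g τ x) (G.lap (G.dirichletHeat s g t) x) t := by
  lift x to s using hx
  simp only [dirichletHeat_coe]
  exact hasDerivAt_pi.1 (hasDerivAt_exp_smul_apply _ _ t) x

theorem continuous_dirichletHeat : Continuous (G.dirichletHeat s g) := by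
  refine continuous_pi fun x => ?_
  by_cases hx : x ∈ s
  · exact continuous_iff_continuousAt.2 fun t => (hasDerivAt_dirichletHeat (t := t) hx).continuousAt
  · simpa only [dirichletHeat_of_notMem hx] using continuous_const

theorem exp_dirichletLap_nonneg (ht : 0 ≤ t) {v : s → ℝ} (hv : 0 ≤ v) :
    0 ≤ NormedSpace.exp (t • G.dirichletLap s) v := by
  refine exp_smul_apply_nonneg (∑ i ∈ s, G.deg i) (fun u hu i => ?_) ht hv
  have hdeg : G.deg i ≤ ∑ i ∈ s, G.deg i :=
    Finset.single_le_sum (fun j _ => G.deg_nonneg j) i.2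
  have hext : Function.extend ((↑) : s → V) u 0 i = u i := Subtype.val_injective.extend_apply _ _ i
  have hlap := G.lap_add_deg_mul_nonneg (Function.extend_nonneg (f := ((↑) : s → V)) hu le_rfl) i
  have hui : 0 ≤ u i := hu i
  rw [hext] at hlap
  simp only [Pi.add_apply, Pi.smul_apply, Pi.zero_apply, smul_eq_mul, dirichletLap_apply]
  nlinarith

theorem dirichletHeat_le_of_supersolution {w w' : ℝ → V → ℝ} (ht : 0 ≤ t)
    (hw : ∀ σ ∈ Icc 0 t, ∀ x ∈ s, HasDerivAt (fun τ => w τ x) (w' σ x) σ)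
    (hw0 : ∀ σ ∈ Icc 0 t, 0 ≤ w σ) (hsup : ∀ σ ∈ Icc 0 t, ∀ x ∈ s, G.lap (w σ) x ≤ w' σ x)
    (hg : ∀ x ∈ s, g x ≤ w 0 x) (hx : x ∈ s) : G.dirichletHeat s g t x ≤ w t x := by
  lift x to s using hx
  rw [dirichletHeat_coe]
  refine exp_smul_apply_le_of_hasDerivAt (fun τ hτ _ hv => exp_dirichletLap_nonneg hτ hv) ht
    (w := fun σ => s.restrict (w σ)) (w' := fun σ => s.restrict (w' σ))
    (fun σ hσ => hasDerivAt_pi.2 fun i => hw σ hσ i i.2) (fun σ hσ i => ?_) (fun i => hg i i.2) x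
  calc G.dirichletLap s (s.restrict (w σ)) i ≤ G.lap (w σ) i :=
        G.lap_le_lap_of_le (extend_coe_restrict_le (hw0 σ hσ))
          (Subtype.val_injective.extend_apply _ _ i)
    _ ≤ w' σ i := hsup σ hσ i i.2

theorem dirichletHeat_nonneg (hg : 0 ≤ g) (ht : 0 ≤ t) : 0 ≤ G.dirichletHeat s g t :=
  Function.extend_nonneg (exp_dirichletLap_nonneg ht fun i => hg i) le_rfl

theorem dirichletHeat_le_exp_mul {h : V → ℝ} {lam : ℝ} (ht : 0 ≤ t) (hh : 0 ≤ h) (hgh : g ≤ h)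
    (hlap : ∀ x, G.lap h x ≤ lam * h x) (x : V) :
    G.dirichletHeat s g t x ≤ Real.exp (lam * t) * h x := by
  by_cases hx : x ∈ s
  · refine dirichletHeat_le_of_supersolution (w := fun σ => Real.exp (lam * σ) • h)
      (w' := fun σ => (lam * Real.exp (lam * σ)) • h) ht (fun σ _ y _ => ?_)
      (fun σ _ => smul_nonneg (Real.exp_nonneg _) hh) (fun σ _ y _ => ?_)
      (fun y _ => by simpa using hgh y) hx
    · simpa [mul_comm] using ((hasDerivAt_id σ).const_mul lam).exp.mul_const (h y)
    · have := hlap y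
      simp only [lap_smul, Pi.smul_apply, smul_eq_mul]
      nlinarith [Real.exp_pos (lam * σ)]
  · rw [dirichletHeat_of_notMem hx]
    exact mul_nonneg (Real.exp_nonneg _) (hh x)

theorem dirichletHeat_mono (hss' : s ⊆ s') (hg : 0 ≤ g) (ht : 0 ≤ t) (x : V) :
    G.dirichletHeat s g t x ≤ G.dirichletHeat s' g t x := by
  by_cases hx : x ∈ s
  · exact dirichletHeat_le_of_supersolution ht (fun σ _ y hy => hasDerivAt_dirichletHeat (hss' hy))
      (fun σ hσ => dirichletHeat_nonneg hg hσ.1) (fun σ _ y _ => le_rfl)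
      (fun y hy => (dirichletHeat_zero (hss' hy)).ge) hx
  · rw [dirichletHeat_of_notMem hx]
    exact dirichletHeat_nonneg hg ht x

theorem dirichletHeat_le_of_le_const {C : ℝ} (hg : 0 ≤ g) (hgC : ∀ y, g y ≤ C) (ht : 0 ≤ t)
    (x : V) : G.dirichletHeat s g t x ≤ C := by
  simpa using dirichletHeat_le_exp_mul (lam := 0) ht (fun _ => (hg x).trans (hgC x)) hgC
    (fun x => by simp [lap_const]) x

theorem tendsto_dirichletHeat_atTop {C : ℝ} (hg : 0 ≤ g) (hgC : ∀ y, g y ≤ C) (ht : 0 ≤ t)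
    (x : V) : Tendsto (fun s => G.dirichletHeat s g t x) atTop (𝓝 (G.dirichletHeatSup g t x)) :=
  tendsto_atTop_ciSup (fun _ _ hss' => dirichletHeat_mono hss' hg ht x)
    ⟨C, forall_mem_range.2 fun _ => dirichletHeat_le_of_le_const hg hgC ht x⟩

theorem isHeatSolution_dirichletHeatSup [Countable V] {C : ℝ} (hg : 0 ≤ g)
    (hgC : ∀ y, g y ≤ C) : IsHeatSolution G g (G.dirichletHeatSup g) := by
  have hu {t} (ht : 0 ≤ t) := tendsto_dirichletHeat_atTop (G := G) hg hgC ht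
  have hbound {s t} (ht : 0 ≤ t) (x : V) : |G.lap (G.dirichletHeat s g t) x| ≤ G.deg x * C :=
    G.abs_lap_le (dirichletHeat_nonneg hg ht) (dirichletHeat_le_of_le_const hg hgC ht) x
  have hmem (x : V) : ∀ᶠ s in atTop, x ∈ s :=
    (eventually_ge_atTop ({x} : Finset V)).mono fun s hs => hs (Finset.mem_singleton_self x)
  have hderiv (x : V) : ∀ᶠ s in atTop, ∀ t,
      HasDerivAt (fun τ => G.dirichletHeat s g τ x) (G.lap (G.dirichletHeat s g t) x) t :=
    (hmem x).mono fun s hs t => hasDerivAt_dirichletHeat hs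
  refine ⟨funext fun x => tendsto_nhds_unique (hu le_rfl x)
      (tendsto_const_nhds.congr' ((hmem x).mono fun s hs => (dirichletHeat_zero hs).symm)),
    fun t x ht => ge_of_tendsto' (hu ht x) fun s => dirichletHeat_nonneg hg ht x,
    ⟨C, fun t x ht => le_of_tendsto' (hu ht x) fun s => dirichletHeat_le_of_le_const hg hgC ht x⟩,
    fun x t ht => hasDerivWithinAt_Ici_of_integral_eq
      (v' := fun σ => G.lap (G.dirichletHeatSup g σ) x) ?_ (fun t ht => ?_) ht⟩
  · refine (G.continuous_lap_apply x).comp_continuousOn <| continuousOn_pi.2 fun y => ?_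
    exact continuousOn_Ici_of_tendsto (hderiv y) (fun s t ht => hbound ht y) fun t ht => hu ht y
  · exact integral_eq_of_tendsto (hderiv x)
      (fun s => (G.continuous_lap_apply x).comp continuous_dirichletHeat)
      (fun s t ht => hbound ht x) (fun t ht => hu ht x)
      (fun t ht => ((G.continuous_lap_apply x).tendsto _).comp (tendsto_pi_nhds.2 (hu ht)))
      ht

theorem dirichletHeatSup_le_exp_mul {h : V → ℝ} {lam : ℝ} (hg : 0 ≤ g) (hgh : g ≤ h)
    (hlap : ∀ x, G.lap h x ≤ lam * h x) (ht : 0 ≤ t) (x : V) :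
    G.dirichletHeatSup g t x ≤ Real.exp (lam * t) * h x :=
  ciSup_le fun _ => dirichletHeat_le_exp_mul ht (hg.trans hgh) hgh hlap x

end WeightedGraph

/-- Subexponential growth of `λ`-subharmonic functions under the (extended) heat semigroup:
if `f ≥ 0` and `Δf ≤ λ f` with `λ > 0`, then `P_t f ≤ e^{λ t} f`, where
`P_t f := sup {P_t g : 0 ≤ g ≤ f, g bounded}`. -/
theorem stmt19 {V : Type} [Countable V] (G : WeightedGraph V)
    (P : ℝ → (V → ℝ) → V → ℝ) (hP : IsHeatSemigroup G P)
    (f : V → ℝ) (hf0 : ∀ x, 0 ≤ f x)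
    (lam : ℝ) (hlam : 0 < lam) (hsub : ∀ x, G.lap f x ≤ lam * f x) :
    ∀ t : ℝ, 0 ≤ t → ∀ x,
      sSup { c | ∃ g : V → ℝ, (∀ y, 0 ≤ g y) ∧ (∀ y, g y ≤ f y) ∧
          (∃ C, ∀ y, g y ≤ C) ∧ c = P t g x } ≤
        Real.exp (lam * t) * f x := by
  intro t ht x
  refine Real.sSup_le ?_ (mul_nonneg (Real.exp_nonneg _) (hf0 x))
  rintro _ ⟨g, hg0, hgf, ⟨C, hgC⟩, rfl⟩
  calc P t g x ≤ G.dirichletHeatSup g t x :=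
        (hP.1 g hg0 ⟨C, hgC⟩).2 _ (G.isHeatSolution_dirichletHeatSup hg0 hgC) t x ht
    _ ≤ Real.exp (lam * t) * min (f x) C :=
        G.dirichletHeatSup_le_exp_mul hg0 (fun y => le_min (hgf y) (hgC y))
          (G.lap_min_le hlam.le ((hg0 x).trans (hgC x)) hsub) ht x
    _ ≤ Real.exp (lam * t) * f x := by gcongr; exact min_le_left _ _
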